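/- arXiv:1802.10163 — 2 statements merged into one kernel-verified Lean document; each statement's English description precedes it below -/
import Mathlib

section
/- Let N = (V,F) be a maximal directed mixed graph and let e be a directed edge α→β in N. Then I(N − e) = I(N) if and only if α ∈ u(β, I(N − e)), where N − e denotes the DMG (V, F∖{e}). -/
/-!
Directed mixed graphs (DMGs) with μ-separation, following
Mogensen & Hansen, "Markov equivalence of marginalized local independence graphs".
-/

universe u

/-- A directed mixed graph on node set `V`: a set of directed edges (`dir a b`
meaning `a → b`) and a set of bidirected edges (`bi`, a symmetric relation since
bidirected edges are unordered pairs).  Loops are allowed. -/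
structure DMG (V : Type u) where
  dir : V → V → Prop
  bi : V → V → Prop
  bi_symm : ∀ a b, bi a b → bi b a

namespace DMG

variable {V : Type u}

/-- A single step of a walk: an edge instance together with the direction in
which it is traversed (this records, in particular, orientations of loops).
A directed edge has a tail at its source and a head at its target; a bidirected
edge has heads at both endpoints. -/
inductive Step (G : DMG V) : V → V → Type u
  | dirF : ∀ {a b : V}, G.dir a b → Step G a b
  | dirB : ∀ {a b : V}, G.dir b a → Step G a b
  | bid  : ∀ {a b : V}, G.bi a b → Step G a b

/-- Whether the step has a head (edge mark) at its start node. -/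
def Step.headStart {G : DMG V} : ∀ {a b : V}, Step G a b → Bool
  | _, _, .dirF _ => false
  | _, _, .dirB _ => true
  | _, _, .bid _ => true

/-- Whether the step has a head (edge mark) at its end node. -/
def Step.headEnd {G : DMG V} : ∀ {a b : V}, Step G a b → Bool
  | _, _, .dirF _ => true
  | _, _, .dirB _ => false
  | _, _, .bid _ => true

/-- The step traverses a bidirected edge. -/
def Step.IsBid {G : DMG V} {a b : V} : Step G a b → Prop
  | .bid _ => True
  | _ => False

/-- The step traverses a directed edge, forwards. -/
def Step.IsDirF {G : DMG V} {a b : V} : Step G a b → Prop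
  | .dirF _ => True
  | _ => False

/-- The underlying edge of a step: a directed edge is the ordered pair
(tail, head); a bidirected edge is the unordered pair of its endpoints. -/
def Step.edge {G : DMG V} : ∀ {a b : V}, Step G a b → (V × V) ⊕ (Sym2 V)
  | a, b, .dirF _ => Sum.inl (a, b)
  | a, b, .dirB _ => Sum.inl (b, a)
  | a, b, .bid _ => Sum.inr s(a, b)

/-- A walk in a DMG: an alternating sequence of nodes and edges, each edge
between its neighbouring nodes, with a chosen orientation of each edge
(in particular of each directed loop). -/
inductive Walk (G : DMG V) : V → V → Type u
  | nil (a : V) : Walk G a a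
  | cons {a b c : V} (s : Step G a b) (w : Walk G b c) : Walk G a c

namespace Walk

variable {G : DMG V}

/-- A nontrivial walk contains at least one edge. -/
def Nontrivial : ∀ {a b : V}, Walk G a b → Prop
  | _, _, .nil _ => False
  | _, _, .cons _ _ => True

/-- The list of nodes of a walk, in order (with multiplicity). -/
def nodes : ∀ {a b : V}, Walk G a b → List V
  | a, _, .nil _ => [a]
  | a, _, .cons _ w => a :: w.nodes

/-- The non-endpoint (internal) nodes of a walk, in order (with multiplicity). -/
def interior {a b : V} (w : Walk G a b) : List V :=
  (w.nodes.dropLast).drop 1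

/-- The list of edges of a walk. -/
def edges : ∀ {a b : V}, Walk G a b → List ((V × V) ⊕ (Sym2 V))
  | _, _, .nil _ => []
  | _, _, .cons s w => s.edge :: w.edges

/-- Whether the first edge of the walk has a head at the first node
(`false` for a trivial walk). -/
def firstHead : ∀ {a b : V}, Walk G a b → Bool
  | _, _, .nil _ => false
  | _, _, .cons s _ => s.headStart

/-- Whether the last edge of the walk has a head at the last node
(`false` for a trivial walk). -/
def lastHead : ∀ {a b : V}, Walk G a b → Bool
  | _, _, .nil _ => false
  | _, _, .cons s (.nil _) => s.headEnd
  | _, _, .cons _ (.cons t w) => lastHead (Walk.cons t w)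

/-- Helper: conditions at all remaining internal node instances of a walk,
where `h` records whether the edge arriving at the current start node has a
head there.  A node instance is a collider if both adjoining edges have a
head at it; a collider must lie in `Anc`, a noncollider must avoid `C`. -/
def openFrom (C Anc : Set V) : ∀ {a b : V}, Bool → Walk G a b → Prop
  | _, _, _, .nil _ => True
  | a, _, h, .cons s w =>
      (if h && s.headStart then a ∈ Anc else a ∉ C) ∧ openFrom C Anc s.headEnd w

/-- Helper: every remaining internal node instance which is a collider lies in `S`. -/
def collInFrom (S : Set V) : ∀ {a b : V}, Bool → Walk G a b → Prop
  | _, _, _, .nil _ => True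
  | a, _, h, .cons s w =>
      ((h && s.headStart) = true → a ∈ S) ∧ collInFrom S s.headEnd w

/-- Every collider (internal node instance with heads on both sides) of the
walk lies in `S`. -/
def CollidersIn (S : Set V) : ∀ {a b : V}, Walk G a b → Prop
  | _, _, .nil _ => True
  | _, _, .cons s w => collInFrom S s.headEnd w

/-- The walk has no colliders. -/
def NoColliders {a b : V} (w : Walk G a b) : Prop :=
  w.CollidersIn ∅

/-- Helper: every remaining internal node instance is a collider. -/
def allCollFrom : ∀ {a b : V}, Bool → Walk G a b → Prop
  | _, _, _, .nil _ => True
  | _, _, h, .cons s w => (h && s.headStart) = true ∧ allCollFrom s.headEnd w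

/-- Every internal node instance of the walk is a collider (no noncolliders). -/
def AllColliders : ∀ {a b : V}, Walk G a b → Prop
  | _, _, .nil _ => True
  | _, _, .cons s w => allCollFrom s.headEnd w

/-- Every edge of the walk is bidirected. -/
def AllBid : ∀ {a b : V}, Walk G a b → Prop
  | _, _, .nil _ => True
  | _, _, .cons s w => s.IsBid ∧ w.AllBid

/-- The walk consists of a directed first edge (pointing forwards) followed by
bidirected edges only (the form `α → β` or `α → γ₁ ↔ ⋯ ↔ γₙ ↔ β`). -/
def UniForm : ∀ {a b : V}, Walk G a b → Prop
  | _, _, .nil _ => False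
  | _, _, .cons s w => s.IsDirF ∧ w.AllBid

end Walk

/-- `a` is an ancestor of `b`: there is a (possibly trivial) directed path
from `a` to `b`. -/
def anc (G : DMG V) (a b : V) : Prop := Relation.ReflTransGen G.dir a b

/-- The set of ancestors of nodes of `C`. -/
def anSet (G : DMG V) (C : Set V) : Set V := {a | ∃ c ∈ C, G.anc a c}

/-- The walk is μ-connecting given `C`: it is nontrivial, its first node is not
in `C`, every collider lies in `An(C)`, no noncollider lies in `C`, and its
final edge has a head at the final node. -/
def Walk.MuConn {G : DMG V} (C : Set V) : ∀ {a b : V}, Walk G a b → Prop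
  | _, _, .nil _ => False
  | a, _, .cons s w =>
      a ∉ C ∧ Walk.openFrom C (G.anSet C) s.headEnd w ∧ (Walk.cons s w).lastHead = true

/-- `B` is μ-separated from `A` given `C` in `G`: there is no μ-connecting
walk from any node of `A` to any node of `B` given `C`. -/
def muSep (G : DMG V) (A B C : Set V) : Prop :=
  ∀ ⦃a b : V⦄, a ∈ A → b ∈ B → ∀ w : Walk G a b, ¬ w.MuConn C

/-- Two DMGs on the same node set are Markov equivalent: they induce the same
independence model via μ-separation, i.e. `I(G₁) = I(G₂)`. -/
def MarkovEq (G₁ G₂ : DMG V) : Prop :=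
  ∀ A B C : Set V, muSep G₁ A B C ↔ muSep G₂ A B C

/-- `b` is separable from `a` in `I(G)`: there is `C ⊆ V ∖ {a}` with
`⟨{a},{b} | C⟩ ∈ I(G)`. -/
def separable (G : DMG V) (a b : V) : Prop :=
  ∃ C : Set V, a ∉ C ∧ muSep G {a} {b} C

/-- `a ∈ u(b, I(G))`: `b` is inseparable from `a` in `I(G)`. -/
def inU (G : DMG V) (a b : V) : Prop := ¬ G.separable a b

/-- `G₁` is a subgraph of `G₂` (same node set, edge-set inclusion). -/
def Sub (G₁ G₂ : DMG V) : Prop :=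
  (∀ a b, G₁.dir a b → G₂.dir a b) ∧ (∀ a b, G₁.bi a b → G₂.bi a b)

/-- The DMG obtained by adding the directed edge `a → b`. -/
def addDir (G : DMG V) (a b : V) : DMG V where
  dir x y := G.dir x y ∨ (x = a ∧ y = b)
  bi := G.bi
  bi_symm := G.bi_symm

/-- The DMG obtained by adding the bidirected edge `a ↔ b`. -/
def addBi (G : DMG V) (a b : V) : DMG V where
  dir := G.dir
  bi x y := G.bi x y ∨ (x = a ∧ y = b) ∨ (x = b ∧ y = a)
  bi_symm x y h := by
    rcases h with h | h | h
    · exact Or.inl (G.bi_symm _ _ h)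
    · exact Or.inr (Or.inr ⟨h.2, h.1⟩)
    · exact Or.inr (Or.inl ⟨h.2, h.1⟩)

/-- The DMG obtained by removing the directed edge `a → b`. -/
def removeDir (G : DMG V) (a b : V) : DMG V where
  dir x y := G.dir x y ∧ ¬(x = a ∧ y = b)
  bi := G.bi
  bi_symm := G.bi_symm

/-- The DMG obtained by removing the bidirected edge `a ↔ b`. -/
def removeBi (G : DMG V) (a b : V) : DMG V where
  dir := G.dir
  bi x y := G.bi x y ∧ ¬((x = a ∧ y = b) ∨ (x = b ∧ y = a))
  bi_symm x y h := ⟨G.bi_symm _ _ h.1, fun hc => h.2 (by tauto)⟩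

/-- The complete DMG: all directed and all bidirected edges present. -/
def IsComplete (G : DMG V) : Prop :=
  (∀ a b, G.dir a b) ∧ (∀ a b, G.bi a b)

/-- A DMG is maximal if it is complete, or adding any (absent) edge changes the
induced independence model. -/
def IsMaximal (G : DMG V) : Prop :=
  G.IsComplete ∨
    ∀ a b : V, (¬ G.dir a b → ¬ MarkovEq (G.addDir a b) G) ∧
      (¬ G.bi a b → ¬ MarkovEq (G.addBi a b) G)

end DMG
namespace DMG

variable {V : Type u}

/-- An inducing path from `a` to `b`: a nontrivial path or cycle from `a` to
`b` with a head at `b`, with no noncolliders, and on which every node is an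
ancestor of `a` or of `b`. -/
def IsInducingPath (G : DMG V) {a b : V} (w : Walk G a b) : Prop :=
  w.Nontrivial ∧
  (w.nodes.Nodup ∨ (a = b ∧ w.nodes.dropLast.Nodup)) ∧
  w.lastHead = true ∧
  w.AllColliders ∧
  ∀ x ∈ w.nodes, G.anc x a ∨ G.anc x b

/-- A bidirected inducing path: an inducing path all of whose edges are bidirected. -/
def IsBidirectedIP (G : DMG V) {a b : V} (w : Walk G a b) : Prop :=
  G.IsInducingPath w ∧ w.AllBid

/-- A directed inducing path: an inducing path of the form `α → β` or
`α → γ₁ ↔ ⋯ ↔ γₙ ↔ β` with every `γᵢ` an ancestor of `β`. -/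
def IsDirectedIP (G : DMG V) {a b : V} (w : Walk G a b) : Prop :=
  G.IsInducingPath w ∧ w.UniForm ∧ ∀ x ∈ w.interior, G.anc x b

/-- There exists a nontrivial walk in `G` between `x` and `y` with no
colliders, all non-endpoint nodes in `M`, and with edge marks `hs` at `x`
(`true` = head) and `he` at `y`. -/
def ConnThrough (G : DMG V) (M : Set V) (x y : V) (hs he : Bool) : Prop :=
  ∃ w : Walk G x y, w.Nontrivial ∧ w.NoColliders ∧
    (∀ z ∈ w.interior, z ∈ M) ∧ w.firstHead = hs ∧ w.lastHead = he

/-- The latent projection `m(G, O)` of `G` on `O`: the DMG on node set `O`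
having an edge (with given endpoint marks) between `α` and `β` if and only if
`G` contains a nontrivial endpoint-identical walk between `α` and `β` with no
colliders and all non-endpoint nodes in `M = V ∖ O`. -/
def latentProj (G : DMG V) (O : Set V) : DMG {x : V // x ∈ O} where
  dir x y := ConnThrough G Oᶜ x.1 y.1 false true
  bi x y := ConnThrough G Oᶜ x.1 y.1 true true ∨ ConnThrough G Oᶜ y.1 x.1 true true
  bi_symm x y h := h.symm

/-- `x` is directedly collider-connected to `b`: there is a nontrivial walk
from `x` to `b` with a head at `b` on which every non-endpoint node is a
collider. -/
def dirCollConn (G : DMG V) (x b : V) : Prop :=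
  ∃ w : Walk G x b, w.Nontrivial ∧ w.AllColliders ∧ w.lastHead = true

/-- The set `D(a,b)` of nodes in `An({a,b})` directedly collider-connected to
`b`, except `a`. -/
def Dset (G : DMG V) (a b : V) : Set V :=
  {x | x ∈ G.anSet {a, b} ∧ G.dirCollConn x b} \ {a}

/-- `a` and `b` are potential siblings in the independence model `I(G)`. -/
def PotSib (G : DMG V) (a b : V) : Prop :=
  (G.inU b a ∧ G.inU a b) ∧
  (∀ (γ : V) (C : Set V), b ∈ C → muSep G {γ} {a} C → muSep G {γ} {b} C) ∧
  (∀ (γ : V) (C : Set V), a ∈ C → muSep G {γ} {b} C → muSep G {γ} {a} C)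

/-- `a` is a potential parent of `b` in the independence model `I(G)`. -/
def PotPar (G : DMG V) (a b : V) : Prop :=
  G.inU a b ∧
  (∀ (γ : V) (C : Set V), a ∉ C → muSep G {γ} {b} C → muSep G {γ} {a} C) ∧
  (∀ (γ δ : V) (C : Set V), a ∉ C → b ∈ C →
    muSep G {γ} {δ} C → muSep G {γ} {b} C ∨ muSep G {a} {δ} C) ∧
  (∀ (γ : V) (C : Set V), a ∉ C → muSep G {b} {γ} C → muSep G {b} {γ} (C ∪ {a}))

/-- The graph `N(I(G))`: directed edge `a → b` present iff `a` is a potential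
parent of `b` in `I(G)`, bidirected edge `a ↔ b` present iff `a` and `b` are
potential siblings in `I(G)` (potential siblinghood is symmetric). -/
def NGraph (G : DMG V) : DMG V where
  dir a b := G.PotPar a b
  bi a b := G.PotSib a b ∨ G.PotSib b a
  bi_symm _ _ h := h.symm

/-- A path is m-connecting given `C` if it is a path (no repeated nodes), no
noncollider on it is in `C` and every collider on it is in `An(C)`. -/
def Walk.MConn {G : DMG V} (C : Set V) : ∀ {a b : V}, Walk G a b → Prop
  | _, _, .nil _ => True
  | _, _, .cons s w =>
      (Walk.cons s w).nodes.Nodup ∧ Walk.openFrom C (G.anSet C) s.headEnd w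

/-- `A` and `B` are m-separated by `C`: there is no m-connecting path between
a node of `A` and a node of `B` given `C`. -/
def mSep (G : DMG V) (A B C : Set V) : Prop :=
  ∀ ⦃a b : V⦄, a ∈ A → b ∈ B →
    (∀ w : Walk G a b, ¬ w.MConn C) ∧ (∀ w : Walk G b a, ¬ w.MConn C)

/-- Auxiliary directed-edge relation of the `B`-history version of `G`. -/
def histDir (G : DMG V) (B : Set V) : (V ⊕ {x : V // x ∈ B}) → (V ⊕ {x : V // x ∈ B}) → Prop
  | .inl u, .inl v => G.dir u v
  | .inl u, .inr v => G.dir u v.1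
  | _, _ => False

/-- Auxiliary bidirected-edge relation of the `B`-history version of `G`. -/
def histBi (G : DMG V) (B : Set V) : (V ⊕ {x : V // x ∈ B}) → (V ⊕ {x : V // x ∈ B}) → Prop
  | .inl u, .inl v => G.bi u v
  | .inl u, .inr v => G.bi u v.1
  | .inr u, .inl v => G.bi u.1 v
  | .inr _, .inr _ => False

/-- The `B`-history version `G(B)` of `G`: node set `V ⊔ Bᵖ`, whose subgraph
on `V` is `G`, with additionally `α ↔ βᵖ` whenever `α ↔ β` in `G` and
`α → βᵖ` whenever `α → β` in `G` (for `α ∈ V`, `β ∈ B`). -/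
def hist (G : DMG V) (B : Set V) : DMG (V ⊕ {x : V // x ∈ B}) where
  dir := G.histDir B
  bi := G.histBi B
  bi_symm x y h := by
    cases x <;> cases y <;>
      simp only [histBi] at h ⊢ <;>
      first
        | exact G.bi_symm _ _ h
        | exact h

end DMG

/-!
The forward direction holds because the edge `a → b` itself μ-connects `a` to `b` given any set
not containing `a`.

For the converse, write `G = N - e` and read μ-connecting walks as runs of a transition system on
`V × Bool`. Adding an edge leaves `I(G)` unchanged as soon as every use of the new edge can be
simulated by a run of `G`. Since `b` is inseparable from `a`, some walk μ-connects `a` to `b`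
given `An({a, b}) ∖ {a}`; after its last visit to `a` it is `a → c ↔ ⋯ ↔ b` or `a ↔ c ↔ ⋯ ↔ b`
with all later nodes in `An({a, b})`. Maximality of `N` says that an edge whose addition does not
change `I(N)` is already there, and this makes all those nodes ancestors of `b` in `G`. In the
first case `a → b` runs parallel to `a → c ↔ ⋯ ↔ b` and adding it is invisible. In the second,
maximality gives `a ↔ b` in `N` and makes every parent (sibling) of `a` a parent (sibling) of `b`,
so a walk through `a → b` can be rerouted through `a ↔ b` or through the matching edge at `b`.
-/

open Relation

namespace DMG

variable {V : Type u} {G G' : DMG V} {C : Set V}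

section MuStep

variable (G C)

/-- An edge between `u` and `v` with an arrowhead at `u` iff `hs` and at `v` iff `he`. -/
def MarkedEdge (u v : V) : Bool → Bool → Prop
  | false, true => G.dir u v
  | true, false => G.dir v u
  | true, true => G.bi u v
  | false, false => False

/-- A walk given `C` may pass through `v`, where `coll` records whether `v` is a collider. -/
def Passable (v : V) (coll : Bool) : Prop :=
  if coll then v ∈ G.anSet C else v ∉ C

/-- The flag of a state records whether the walk entered the node through an arrowhead. -/
def muStep (p q : V × Bool) : Prop :=
  ∃ hs, G.MarkedEdge p.1 q.1 hs q.2 ∧ G.Passable C p.1 (p.2 && hs)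

variable {G C}

@[simp]
lemma passable_true {v : V} : G.Passable C v true ↔ v ∈ G.anSet C := by
  simp [Passable]

@[simp]
lemma passable_false {v : V} : G.Passable C v false ↔ v ∉ C := by
  simp [Passable]

lemma muStep_dir {u v : V} {m : Bool} (h : G.dir u v) (hu : u ∉ C) :
    G.muStep C (u, m) (v, true) :=
  ⟨false, h, by simpa using hu⟩

lemma muStep_dir_rev {u v : V} {m : Bool} (h : G.dir v u) (hu : G.Passable C u m) :
    G.muStep C (u, m) (v, false) :=
  ⟨true, h, by simpa using hu⟩

lemma muStep_bi {u v : V} {m : Bool} (h : G.bi u v) (hu : G.Passable C u m) :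
    G.muStep C (u, m) (v, true) :=
  ⟨true, h, by simpa using hu⟩

lemma MarkedEdge.symm {u v : V} {hs he : Bool} (h : G.MarkedEdge u v hs he) :
    G.MarkedEdge v u he hs := by
  cases hs <;> cases he
  exacts [h, h, h, G.bi_symm _ _ h]

lemma markedEdge_step {u v : V} (s : Step G u v) : G.MarkedEdge u v s.headStart s.headEnd := by
  cases s <;> assumption

lemma exists_step_of_markedEdge {u v : V} {hs he : Bool} (h : G.MarkedEdge u v hs he) :
    ∃ s : Step G u v, s.headStart = hs ∧ s.headEnd = he := by
  cases hs <;> cases he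
  exacts [h.elim, ⟨.dirF h, rfl, rfl⟩, ⟨.dirB h, rfl, rfl⟩, ⟨.bid h, rfl, rfl⟩]

lemma reach_of_openFrom {u v β : V} (s : Step G u v) (w : Walk G v β)
    (hw : w.openFrom C (G.anSet C) s.headEnd) (hlast : (Walk.cons s w).lastHead = true) :
    ReflTransGen (G.muStep C) (v, s.headEnd) (β, true) := by
  induction w generalizing u with
  | nil => exact hlast ▸ .refl
  | cons t w ih => exact .head ⟨t.headStart, markedEdge_step t, hw.1⟩ (ih t hw.2 hlast)

lemma exists_openFrom_of_reach {β : V} {p : V × Bool} (h : ReflTransGen (G.muStep C) p (β, true))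
    {u : V} (s : Step G u p.1) (hs : s.headEnd = p.2) :
    ∃ w : Walk G p.1 β, w.openFrom C (G.anSet C) p.2 ∧ (Walk.cons s w).lastHead = true := by
  induction h using ReflTransGen.head_induction_on generalizing u with
  | refl => exact ⟨.nil β, trivial, hs⟩
  | head hstep _ ih =>
    obtain ⟨hs', hedge, hpass⟩ := hstep
    obtain ⟨t, rfl, ht⟩ := exists_step_of_markedEdge hedge
    obtain ⟨w, hw, hlast⟩ := ih t ht
    exact ⟨.cons t w, ⟨hpass, ht ▸ hw⟩, hlast⟩

theorem exists_muConn_iff_reach {α β : V} :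
    (∃ w : Walk G α β, w.MuConn C) ↔ ReflTransGen (G.muStep C) (α, false) (β, true) := by
  constructor
  · rintro ⟨_ | ⟨s, w⟩, hw⟩
    · exact hw.elim
    · obtain ⟨hα, hopen, hlast⟩ := hw
      exact .head ⟨s.headStart, markedEdge_step s, by simpa using hα⟩
        (reach_of_openFrom s w hopen hlast)
  · intro h
    rcases ReflTransGen.cases_head h with hrefl | ⟨p, ⟨hs, hedge, hα⟩, hrest⟩
    · simp at hrefl
    obtain ⟨s, rfl, hsp⟩ := exists_step_of_markedEdge hedge
    obtain ⟨w, hw, hlast⟩ := exists_openFrom_of_reach hrest s hsp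
    exact ⟨.cons s w, by simpa using hα, hsp ▸ hw, hlast⟩

lemma muSep_iff_not_reach {A B : Set V} :
    G.muSep A B C ↔ ∀ a ∈ A, ∀ b ∈ B, ¬ ReflTransGen (G.muStep C) (a, false) (b, true) := by
  simp only [muSep, ← exists_muConn_iff_reach]
  exact ⟨fun h a ha b hb ⟨w, hw⟩ => h ha hb w hw, fun h a b ha hb w hw => h a ha b hb ⟨w, hw⟩⟩

end MuStep

section Ancestors

lemma anc_refl (x : V) : G.anc x x := .refl

lemma anc_trans {x y z : V} (h₁ : G.anc x y) (h₂ : G.anc y z) : G.anc x z :=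
  ReflTransGen.trans h₁ h₂

lemma anc_of_dir {x y : V} (h : G.dir x y) : G.anc x y := .single h

lemma subset_anSet : C ⊆ G.anSet C := fun c hc => ⟨c, hc, anc_refl c⟩

lemma mem_anSet_of_anc {x y : V} (h : G.anc x y) (hy : y ∈ G.anSet C) : x ∈ G.anSet C := by
  obtain ⟨c, hc, hyc⟩ := hy
  exact ⟨c, hc, anc_trans h hyc⟩

lemma anSet_subset_of_subset {D : Set V} (h : C ⊆ G.anSet D) : G.anSet C ⊆ G.anSet D :=
  fun _ ⟨_, hc, hxc⟩ => mem_anSet_of_anc hxc (h hc)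

lemma exists_dir_of_anc_of_ne {u a : V} (h : G.anc u a) (hu : u ≠ a) :
    ∃ d, d ≠ a ∧ G.anc u d ∧ G.dir d a := by
  induction h using ReflTransGen.head_induction_on with
  | refl => exact absurd rfl hu
  | @head u w huw hwa ih =>
    by_cases hw : w = a
    · exact ⟨u, hu, anc_refl u, hw ▸ huw⟩
    · obtain ⟨d, hd, hwd, hda⟩ := ih hw
      exact ⟨d, hd, anc_trans (anc_of_dir huw) hwd, hda⟩

end Ancestors

section Subgraph

lemma Sub.anc (h : G.Sub G') {x y : V} (hxy : G.anc x y) : G'.anc x y :=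
  ReflTransGen.mono h.1 _ _ hxy

lemma Sub.anSet_subset (h : G.Sub G') : G.anSet C ⊆ G'.anSet C :=
  fun _ ⟨c, hc, hxc⟩ => ⟨c, hc, h.anc hxc⟩

lemma Sub.markedEdge (h : G.Sub G') {u v : V} {hs he : Bool} (hedge : G.MarkedEdge u v hs he) :
    G'.MarkedEdge u v hs he := by
  cases hs <;> cases he
  exacts [hedge, h.1 _ _ hedge, h.1 _ _ hedge, h.2 _ _ hedge]

lemma Sub.passable (h : G.Sub G') {v : V} {coll : Bool} (hp : G.Passable C v coll) :
    G'.Passable C v coll := by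
  cases coll
  · simpa using hp
  · simpa using h.anSet_subset (by simpa using hp)

lemma Sub.reach (h : G.Sub G') {s t : V × Bool} (hst : ReflTransGen (G.muStep C) s t) :
    ReflTransGen (G'.muStep C) s t :=
  ReflTransGen.mono (fun _ _ ⟨hs, hedge, hp⟩ => ⟨hs, h.markedEdge hedge, h.passable hp⟩) _ _ hst

lemma sub_addDir (x y : V) : G.Sub (G.addDir x y) :=
  ⟨fun _ _ h => .inl h, fun _ _ h => h⟩

lemma sub_addBi (x y : V) : G.Sub (G.addBi x y) :=
  ⟨fun _ _ h => h, fun _ _ h => .inl h⟩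

lemma markovEq_of_sub (hsub : G.Sub G')
    (h : ∀ C α β, ReflTransGen (G'.muStep C) (α, false) (β, true) →
      ReflTransGen (G.muStep C) (α, false) (β, true)) :
    MarkovEq G' G := by
  intro A B C
  simp only [muSep_iff_not_reach]
  exact ⟨fun h' a ha b hb hr => h' a ha b hb (hsub.reach hr),
    fun h' a ha b hb hr => h' a ha b hb (h C a b hr)⟩

end Subgraph

section Simulation

/-- State `t` admits every step that state `s` admits. -/
def Subsumes (G : DMG V) (C : Set V) (t s : V × Bool) : Prop :=
  t = s ∨ t = (s.1, true) ∧ s.1 ∈ G.anSet C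

lemma Subsumes.muStep {t s s' : V × Bool} (hts : G.Subsumes C t s) (h : G.muStep C s s') :
    G.muStep C t s' := by
  rcases hts with rfl | ⟨rfl, hmem⟩
  · exact h
  obtain ⟨hs, hedge, hp⟩ := h
  refine ⟨hs, hedge, ?_⟩
  cases hs <;> simp_all

lemma Subsumes.exists_eq {t : V × Bool} {v : V} {m : Bool} (h : G.Subsumes C t (v, m)) :
    ∃ m', t = (v, m') := by
  rcases h with rfl | ⟨rfl, _⟩ <;> exact ⟨_, rfl⟩

lemma Subsumes.exists_passable {t : V × Bool} {v : V} {m : Bool} (h : G.Subsumes C t (v, m))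
    (hp : G.Passable C v m) : ∃ m', t = (v, m') ∧ G.Passable C v m' := by
  rcases h with rfl | ⟨rfl, hmem⟩
  exacts [⟨m, rfl, hp⟩, ⟨true, rfl, by simpa using hmem⟩]

lemma Subsumes.eq_of_true {t : V × Bool} {v : V} (h : G.Subsumes C t (v, true)) :
    t = (v, true) := by
  rcases h with rfl | ⟨rfl, _⟩ <;> rfl

lemma reach_of_simulation
    (H : ∀ s s', G'.muStep C s s' → ∀ t, G.Subsumes C t s →
      ∃ t', G.Subsumes C t' s' ∧ ReflTransGen (G.muStep C) t t')
    {α β : V} (h : ReflTransGen (G'.muStep C) (α, false) (β, true)) :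
    ReflTransGen (G.muStep C) (α, false) (β, true) := by
  have key : ∀ {s'}, ReflTransGen (G'.muStep C) (α, false) s' →
      ∃ t', G.Subsumes C t' s' ∧ ReflTransGen (G.muStep C) (α, false) t' := by
    intro s' h
    induction h with
    | refl => exact ⟨_, .inl rfl, .refl⟩
    | tail _ hstep ih =>
      obtain ⟨t, hts, hrt⟩ := ih
      obtain ⟨t', hts', hrt'⟩ := H _ _ hstep t hts
      exact ⟨t', hts', hrt.trans hrt'⟩
  obtain ⟨t, hts, hrt⟩ := key h
  rwa [hts.eq_of_true] at hrt

end Simulation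

section AddEdge

lemma anc_addDir {x y u v : V} (h : (G.addDir x y).anc u v) :
    G.anc u v ∨ G.anc u x ∧ G.anc y v := by
  induction h using ReflTransGen.head_induction_on with
  | refl => exact .inl (anc_refl _)
  | head hd _ ih =>
    rcases hd with hd | ⟨rfl, rfl⟩
    · exact ih.imp (anc_trans (anc_of_dir hd)) fun h => ⟨anc_trans (anc_of_dir hd) h.1, h.2⟩
    · exact .inr ⟨anc_refl _, ih.elim id And.right⟩

lemma anSet_addDir {x y : V} (hxy : G.anc x y) : (G.addDir x y).anSet C = G.anSet C := by
  refine subset_antisymm (fun u ⟨c, hc, h⟩ => ⟨c, hc, ?_⟩) (sub_addDir x y).anSet_subset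
  exact (anc_addDir h).elim id fun h => anc_trans h.1 (anc_trans hxy h.2)

lemma markedEdge_addDir {x y u v : V} {hs he : Bool} (h : (G.addDir x y).MarkedEdge u v hs he) :
    G.MarkedEdge u v hs he ∨ u = x ∧ v = y ∧ hs = false ∧ he = true ∨
      u = y ∧ v = x ∧ hs = true ∧ he = false := by
  cases hs <;> cases he
  · exact h.elim
  · rcases h with h | ⟨rfl, rfl⟩
    exacts [.inl h, .inr (.inl ⟨rfl, rfl, rfl, rfl⟩)]
  · rcases h with h | ⟨rfl, rfl⟩
    exacts [.inl h, .inr (.inr ⟨rfl, rfl, rfl, rfl⟩)]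
  · exact .inl h

lemma markedEdge_addBi {x y u v : V} {hs he : Bool} (h : (G.addBi x y).MarkedEdge u v hs he) :
    G.MarkedEdge u v hs he ∨ u = x ∧ v = y ∧ hs = true ∧ he = true ∨
      u = y ∧ v = x ∧ hs = true ∧ he = true := by
  cases hs <;> cases he
  · exact h.elim
  · exact .inl h
  · exact .inl h
  · rcases h with h | ⟨rfl, rfl⟩ | ⟨rfl, rfl⟩
    exacts [.inl h, .inr (.inl ⟨rfl, rfl, rfl, rfl⟩), .inr (.inr ⟨rfl, rfl, rfl, rfl⟩)]

lemma markovEq_addDir_of_simulation {x y : V} (hxy : G.anc x y)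
    (fwd : ∀ C m, x ∉ C → ReflTransGen (G.muStep C) (x, m) (y, true))
    (bwd : ∀ C m, G.Passable C y m →
      ∃ t, G.Subsumes C t (x, false) ∧ ReflTransGen (G.muStep C) (y, m) t) :
    MarkovEq (G.addDir x y) G := by
  refine markovEq_of_sub (sub_addDir x y) fun C α β => reach_of_simulation ?_
  rintro ⟨u, m⟩ ⟨v, m'⟩ ⟨hs, hedge, hp⟩ t ht
  have hpG : G.Passable C u (m && hs) := by rwa [Passable, anSet_addDir hxy] at hp
  rcases markedEdge_addDir hedge with hedge | ⟨rfl, rfl, rfl, rfl⟩ | ⟨rfl, rfl, rfl, rfl⟩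
  · exact ⟨_, .inl rfl, .single (ht.muStep ⟨hs, hedge, hpG⟩)⟩
  · obtain ⟨m', rfl⟩ := ht.exists_eq
    exact ⟨_, .inl rfl, fwd C m' (by simpa using hpG)⟩
  · obtain ⟨m', rfl, hp'⟩ := ht.exists_passable (by simpa using hpG)
    exact bwd C m' hp'

lemma markovEq_addBi_of_simulation {x y : V}
    (sim : ∀ C m, G.Passable C x m → ReflTransGen (G.muStep C) (x, m) (y, true))
    (sim' : ∀ C m, G.Passable C y m → ReflTransGen (G.muStep C) (y, m) (x, true)) :
    MarkovEq (G.addBi x y) G := by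
  refine markovEq_of_sub (sub_addBi x y) fun C α β => reach_of_simulation ?_
  rintro ⟨u, m⟩ ⟨v, m'⟩ ⟨hs, hedge, hp⟩ t ht
  change G.Passable C u (m && hs) at hp
  rcases markedEdge_addBi hedge with hedge | ⟨rfl, rfl, rfl, rfl⟩ | ⟨rfl, rfl, rfl, rfl⟩
  · exact ⟨_, .inl rfl, .single (ht.muStep ⟨hs, hedge, hp⟩)⟩
  · obtain ⟨m', rfl, hp'⟩ := ht.exists_passable (by simpa using hp)
    exact ⟨_, .inl rfl, sim C m' hp'⟩
  · obtain ⟨m', rfl, hp'⟩ := ht.exists_passable (by simpa using hp)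
    exact ⟨_, .inl rfl, sim' C m' hp'⟩

end AddEdge

section Reroute

lemma reach_of_anc {u b : V} (h : G.anc u b) (hu : u ∉ G.anSet C) :
    ReflTransGen (G.muStep C) (u, true) (b, true) := by
  induction h using ReflTransGen.head_induction_on with
  | refl => exact .refl
  | head hud _ ih =>
    refine .head (muStep_dir hud fun h => hu (subset_anSet h)) (ih ?_)
    exact fun h => hu (mem_anSet_of_anc (anc_of_dir hud) h)

lemma reach_back_of_anc {z w : V} (h : G.anc z w) (hz : z ∉ G.anSet C) :
    ReflTransGen (G.muStep C) (w, false) (z, false) := by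
  induction h using ReflTransGen.head_induction_on with
  | refl => exact .refl
  | head hzd _ ih =>
    have hd : _ ∉ G.anSet C := fun h => hz (mem_anSet_of_anc (anc_of_dir hzd) h)
    exact (ih hd).tail (muStep_dir_rev hzd (by simpa using fun h => hd (subset_anSet h)))

lemma exists_reach_back_of_anc {c y : V} (h : G.anc c y) (hc : c ∉ G.anSet C) {m : Bool}
    (hm : G.Passable C y m) :
    ∃ m', ReflTransGen (G.muStep C) (y, m) (c, m') ∧ G.Passable C c m' := by
  rcases ReflTransGen.cases_tail h with rfl | ⟨p, hcp, hpy⟩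
  · exact ⟨m, .refl, hm⟩
  · refine ⟨false, .head (muStep_dir_rev hpy hm) (reach_back_of_anc hcp hc), ?_⟩
    simpa using fun h => hc (subset_anSet h)

lemma Passable.eq_false {c : V} {m : Bool} (h : G.Passable C c m) (hc : c ∉ G.anSet C) :
    m = false := by
  cases m
  · rfl
  · exact absurd (by simpa using h) hc

end Reroute

section BidirChain

def BidirChain (G : DMG V) (S : Set V) : V → V → Prop :=
  ReflTransGen fun u v => u ∈ S ∧ G.bi u v

lemma BidirChain.mono {S T : Set V} (hG : G.Sub G') (hST : S ⊆ T) {c b : V}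
    (h : G.BidirChain S c b) : G'.BidirChain T c b :=
  ReflTransGen.mono (fun _ _ ⟨hu, huv⟩ => ⟨hST hu, hG.2 _ _ huv⟩) _ _ h

lemma BidirChain.anc {c y : V} (h : G.BidirChain {z | G.anc z y} c y) : G.anc c y := by
  rcases ReflTransGen.cases_head h with rfl | ⟨_, ⟨hc, _⟩, _⟩
  exacts [anc_refl c, hc]

lemma reach_of_bidirChain {c b : V} (h : G.BidirChain {z | G.anc z b} c b) :
    ReflTransGen (G.muStep C) (c, true) (b, true) := by
  induction h using ReflTransGen.head_induction_on with
  | refl => exact .refl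
  | @head c d hcd _ ih =>
    by_cases hc : c ∈ G.anSet C
    · exact .head (muStep_bi hcd.2 (by simpa using hc)) ih
    · exact reach_of_anc hcd.1 hc

/-- The walk runs backwards along the chain while its nodes are in `An(C)`, and otherwise
goes back along a directed path to `y`. -/
lemma exists_reach_back_of_bidirChain {c y : V} (h : G.BidirChain {z | G.anc z y} c y)
    {m : Bool} (hm : G.Passable C y m) :
    ∃ m', ReflTransGen (G.muStep C) (y, m) (c, m') ∧ G.Passable C c m' := by
  induction h using ReflTransGen.head_induction_on with
  | refl => exact ⟨m, .refl, hm⟩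
  | @head c d hcd _ ih =>
    obtain ⟨m', hreach, hp⟩ := ih
    by_cases hc : c ∈ G.anSet C
    · exact ⟨true, hreach.tail (muStep_bi (G.bi_symm _ _ hcd.2) hp), by simpa using hc⟩
    · exact exists_reach_back_of_anc hcd.1 hc hm

end BidirChain

section RedundantEdges

theorem markovEq_addDir_of_dir_bidirChain {x c y : V} (hxc : G.dir x c)
    (hcy : G.BidirChain {z | G.anc z y} c y) : MarkovEq (G.addDir x y) G := by
  refine markovEq_addDir_of_simulation (anc_trans (anc_of_dir hxc) hcy.anc)
    (fun C m hx => .head (muStep_dir hxc hx) (reach_of_bidirChain hcy))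
    (fun C m hy => ?_)
  obtain ⟨m', hreach, hp⟩ := exists_reach_back_of_bidirChain hcy hy
  exact ⟨_, .inl rfl, hreach.tail (muStep_dir_rev hxc hp)⟩

theorem markovEq_addBi_of_bi_bidirChain {x c y : V} (hxc : G.bi x c)
    (hcy : G.BidirChain {z | G.anc z y} c y) : MarkovEq (G.addBi x y) G := by
  refine markovEq_addBi_of_simulation
    (fun C m hx => .head (muStep_bi hxc hx) (reach_of_bidirChain hcy))
    (fun C m hy => ?_)
  obtain ⟨m', hreach, hp⟩ := exists_reach_back_of_bidirChain hcy hy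
  exact hreach.tail (muStep_bi (G.bi_symm _ _ hxc) hp)

theorem markovEq_addDir_of_bi {x p y : V} (hxp : G.dir x p) (hpy : G.anc p y)
    (hxy : G.bi x y) : MarkovEq (G.addDir x y) G := by
  have hxy' : G.anc x y := anc_trans (anc_of_dir hxp) hpy
  refine markovEq_addDir_of_simulation hxy' (fun C m hx => ?_) (fun C m hy => ?_)
  · by_cases hxA : x ∈ G.anSet C
    · exact .single (muStep_bi hxy (by cases m <;> simpa))
    · refine .head (muStep_dir hxp hx) (reach_of_anc hpy fun h => hxA ?_)
      exact mem_anSet_of_anc (anc_of_dir hxp) h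
  · by_cases hxA : x ∈ G.anSet C
    · exact ⟨_, .inr ⟨rfl, hxA⟩, .single (muStep_bi (G.bi_symm _ _ hxy) hy)⟩
    · obtain ⟨m', hreach, hp⟩ := exists_reach_back_of_anc hxy' hxA hy
      exact ⟨_, .inl (by rw [hp.eq_false hxA]), hreach⟩

theorem markovEq_addDir_self_of_bi {a : V} (haa : G.bi a a) : MarkovEq (G.addDir a a) G := by
  refine markovEq_addDir_of_simulation (anc_refl a) (fun C m ha => ?_) (fun C m ha => ?_)
  · cases m
    exacts [.single (muStep_bi haa (by simpa using ha)), .refl]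
  · refine ⟨_, ?_, .refl⟩
    cases m
    exacts [.inl rfl, .inr ⟨rfl, by simpa using ha⟩]

end RedundantEdges

section Absorbing

structure Absorbs (G : DMG V) (a b : V) : Prop where
  bi : G.bi a b
  dir_of_dir : ∀ x, x ≠ a → G.dir x a → G.dir x b
  bi_of_bi : ∀ x, x ≠ a → G.bi x a → G.bi x b

variable {a b β : V}


lemma mem_anSet_or_of_addDir (ha : a ∈ (G.addDir a b).anSet C) :
    a ∈ G.anSet C ∨ b ∈ G.anSet C := by
  obtain ⟨c, hc, hac⟩ := ha
  exact (anc_addDir hac).imp (fun h => ⟨c, hc, h⟩) fun h => ⟨c, hc, h.2⟩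

def HeadExit (G : DMG V) (C : Set V) (b β : V) : Prop :=
  ∃ w he, G.MarkedEdge b w true he ∧ ReflTransGen (G.muStep C) (w, he) (β, true)

/-- A run of `G + (a → b)` from a state `s` to `(β, true)` is replaced by a run of `G`; at `a`
the replacement may leave through `a ↔ b` or through an edge of `b` with an arrowhead at `b`. -/
def AbsorbInv (G : DMG V) (C : Set V) (a b β : V) (s : V × Bool) : Prop :=
  (s.1 ≠ a → ReflTransGen (G.muStep C) s (β, true)) ∧
  (s = (a, true) → ReflTransGen (G.muStep C) (a, true) (β, true) ∨
    ReflTransGen (G.muStep C) (b, true) (β, true)) ∧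
  (s = (a, false) → ReflTransGen (G.muStep C) (a, false) (β, true) ∧ G.HeadExit C b β)

lemma absorbInv_of_ne {v : V} {m : Bool} (hv : v ≠ a) :
    G.AbsorbInv C a b β (v, m) ↔ ReflTransGen (G.muStep C) (v, m) (β, true) := by
  simp [AbsorbInv, hv]

lemma absorbInv_true : G.AbsorbInv C a b β (a, true) ↔
    ReflTransGen (G.muStep C) (a, true) (β, true) ∨
      ReflTransGen (G.muStep C) (b, true) (β, true) := by
  simp [AbsorbInv]

lemma absorbInv_false : G.AbsorbInv C a b β (a, false) ↔
    ReflTransGen (G.muStep C) (a, false) (β, true) ∧ G.HeadExit C b β := by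
  simp [AbsorbInv]

lemma reach_of_headExit {m : Bool} (hb : G.Passable C b m) (h : G.HeadExit C b β) :
    ReflTransGen (G.muStep C) (b, m) (β, true) := by
  obtain ⟨w, he, hedge, hreach⟩ := h
  exact .head ⟨true, hedge, by simpa using hb⟩ hreach

lemma absorbInv_of_reach_true {v : V} (h : G.AbsorbInv C a b β (v, true)) :
    ReflTransGen (G.muStep C) (v, true) (β, true) ∨
      ReflTransGen (G.muStep C) (b, true) (β, true) := by
  by_cases hv : v = a
  · subst hv
    exact absorbInv_true.1 h
  · exact .inl ((absorbInv_of_ne hv).1 h)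

namespace Absorbs

lemma markedEdge_in (h : G.Absorbs a b) {u : V} {hs : Bool} (hu : u ≠ a)
    (hedge : G.MarkedEdge u a hs true) : G.MarkedEdge u b hs true := by
  cases hs
  exacts [h.dir_of_dir u hu hedge, h.bi_of_bi u hu hedge]

lemma markedEdge_out (h : G.Absorbs a b) {v : V} {he : Bool} (hv : v ≠ a)
    (hedge : G.MarkedEdge a v true he) : G.MarkedEdge b v true he :=
  (h.markedEdge_in hv hedge.symm).symm

lemma anSet_addDir (h : G.Absorbs a b) {u : V} (hu : u ≠ a)
    (hmem : u ∈ (G.addDir a b).anSet C) : u ∈ G.anSet C := by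
  obtain ⟨c, hc, huc⟩ := hmem
  rcases anc_addDir huc with huc | ⟨hua, hbc⟩
  · exact ⟨c, hc, huc⟩
  · obtain ⟨d, hd, hud, hda⟩ := exists_dir_of_anc_of_ne hua hu
    exact mem_anSet_of_anc (anc_trans hud (anc_of_dir (h.dir_of_dir d hd hda))) ⟨c, hc, hbc⟩

lemma passable_addDir (h : G.Absorbs a b) {u : V} {coll : Bool} (hu : u ≠ a)
    (hp : (G.addDir a b).Passable C u coll) : G.Passable C u coll := by
  cases coll
  · simpa using hp
  · simpa using h.anSet_addDir hu (by simpa using hp)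

lemma bi_self (h : G.Absorbs a b) (hab : a ≠ b) : G.bi b b :=
  h.bi_of_bi b hab.symm (G.bi_symm _ _ h.bi)

lemma absorbInv_of_reach_a (h : G.Absorbs a b) {m : Bool}
    (hf : ReflTransGen (G.muStep C) (a, false) (β, true))
    (ht : ReflTransGen (G.muStep C) (a, true) (β, true)) : G.AbsorbInv C a b β (a, m) := by
  cases m
  · exact absorbInv_false.2 ⟨hf, a, true, G.bi_symm _ _ h.bi, ht⟩
  · exact absorbInv_true.2 (.inl ht)

lemma absorbInv_of_reach_b (h : G.Absorbs a b) (hab : a ≠ b) {m : Bool} (ha : m = false → a ∉ C)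
    (hr : ReflTransGen (G.muStep C) (b, true) (β, true)) : G.AbsorbInv C a b β (a, m) := by
  cases m
  · exact absorbInv_false.2
      ⟨.head (muStep_bi h.bi (by simpa using ha rfl)) hr, b, true, h.bi_self hab, hr⟩
  · exact absorbInv_true.2 (.inr hr)

lemma reach_and_headExit (h : G.Absorbs a b) {v : V} {m' : Bool}
    (hedge : G.MarkedEdge a v true m') (hinv : G.AbsorbInv C a b β (v, m')) :
    ReflTransGen (G.muStep C) (v, m') (β, true) ∧ G.HeadExit C b β ∨
      ReflTransGen (G.muStep C) (b, true) (β, true) := by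
  by_cases hv : v = a
  · subst v
    cases m'
    · exact .inl (absorbInv_false.1 hinv)
    · exact (absorbInv_true.1 hinv).imp_left fun hr => ⟨hr, _, true, G.bi_symm _ _ h.bi, hr⟩
  · have hr := (absorbInv_of_ne hv).1 hinv
    exact .inl ⟨hr, v, m', h.markedEdge_out hv hedge, hr⟩

lemma absorbInv_of_muStep_of_ne (h : G.Absorbs a b) {u v : V} {m m' hs : Bool} (hu : u ≠ a)
    (hedge : (G.addDir a b).MarkedEdge u v hs m') (hp : (G.addDir a b).Passable C u (m && hs))
    (hinv : G.AbsorbInv C a b β (v, m')) : G.AbsorbInv C a b β (u, m) := by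
  have hpG := h.passable_addDir hu hp
  refine (absorbInv_of_ne hu).2 ?_
  rcases markedEdge_addDir hedge with hedgeG | ⟨rfl, -⟩ | ⟨rfl, rfl, rfl, rfl⟩
  · by_cases hv : v = a
    · subst v
      cases m'
      · exact .head ⟨hs, hedgeG, hpG⟩ (absorbInv_false.1 hinv).1
      · rcases absorbInv_true.1 hinv with hr | hr
        · exact .head ⟨hs, hedgeG, hpG⟩ hr
        · exact .head ⟨hs, h.markedEdge_in hu hedgeG, hpG⟩ hr
    · exact .head ⟨hs, hedgeG, hpG⟩ ((absorbInv_of_ne hv).1 hinv)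
  · exact absurd rfl hu
  · exact reach_of_headExit (by simpa using hpG) (absorbInv_false.1 hinv).2

lemma absorbInv_of_muStep_of_eq (h : G.Absorbs a b) (hab : a ≠ b) {v : V} {m m' hs : Bool}
    (hedge : (G.addDir a b).MarkedEdge a v hs m') (hp : (G.addDir a b).Passable C a (m && hs))
    (hinv : G.AbsorbInv C a b β (v, m')) : G.AbsorbInv C a b β (a, m) := by
  rcases markedEdge_addDir hedge with hedge | ⟨-, rfl, rfl, rfl⟩ | ⟨hba, -⟩
  · cases hs
    · cases m'
      · exact hedge.elim
      have ha : a ∉ C := by simpa using hp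
      rcases absorbInv_of_reach_true hinv with hr | hr
      · exact h.absorbInv_of_reach_a (.head (muStep_dir hedge ha) hr)
          (.head (muStep_dir hedge ha) hr)
      · exact h.absorbInv_of_reach_b hab (fun _ => ha) hr
    · rcases h.reach_and_headExit hedge hinv with ⟨hr, hexit⟩ | hr
      · cases m
        · exact absorbInv_false.2 ⟨.head ⟨true, hedge, by simpa using hp⟩ hr, hexit⟩
        · rcases mem_anSet_or_of_addDir (by simpa using hp) with ha | hb
          · exact absorbInv_true.2 (.inl (.head ⟨true, hedge, by simpa using ha⟩ hr))
          · exact absorbInv_true.2 (.inr (reach_of_headExit (by simpa using hb) hexit))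
      · exact h.absorbInv_of_reach_b hab (fun hm => by subst hm; simpa using hp) hr
  · exact h.absorbInv_of_reach_b hab (fun _ => by simpa using hp)
      ((absorbInv_of_ne (Ne.symm hab)).1 hinv)
  · exact absurd hba hab

lemma absorbInv_of_muStep (h : G.Absorbs a b) (hab : a ≠ b) {s s' : V × Bool}
    (hstep : (G.addDir a b).muStep C s s') (hinv : G.AbsorbInv C a b β s') :
    G.AbsorbInv C a b β s := by
  rcases s with ⟨u, m⟩
  rcases s' with ⟨v, m'⟩
  obtain ⟨hs, hedge, hp⟩ := hstep
  by_cases hu : u = a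
  · subst u
    exact h.absorbInv_of_muStep_of_eq hab hedge hp hinv
  · exact h.absorbInv_of_muStep_of_ne hu hedge hp hinv

end Absorbs

theorem markovEq_addDir_of_absorbs (h : G.Absorbs a b) (hab : a ≠ b) :
    MarkovEq (G.addDir a b) G := by
  refine markovEq_of_sub (sub_addDir a b) fun C α β hreach => ?_
  have key : ∀ s, ReflTransGen ((G.addDir a b).muStep C) s (β, true) → G.AbsorbInv C a b β s := by
    intro s hs
    induction hs using ReflTransGen.head_induction_on with
    | refl =>
      by_cases hβ : β = a
      · subst hβ
        exact absorbInv_true.2 (.inl .refl)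
      · exact (absorbInv_of_ne hβ).2 .refl
    | head hstep _ ih => exact h.absorbInv_of_muStep hab hstep ih
  by_cases hα : α = a
  · subst hα
    exact (absorbInv_false.1 (key _ hreach)).1
  · exact (absorbInv_of_ne hα).1 (key _ hreach)

end Absorbing

section Extract

variable {a b : V}

def ChainConnected (G : DMG V) (a b : V) : Prop :=
  ∃ c, (G.dir a c ∨ G.bi a c) ∧ G.BidirChain (G.anSet {a, b} \ {a}) c b

/-- What a run to `(b, true)` given `An({a, b}) ∖ {a}` reveals about its current state. -/
def ExtractInv (G : DMG V) (a b : V) (s : V × Bool) : Prop :=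
  (s.2 = true → s.1 ∈ G.anSet {a, b} ∧
    (G.BidirChain (G.anSet {a, b} \ {a}) s.1 b ∨ G.ChainConnected a b)) ∧
  (s.2 = false → s.1 ∈ G.anSet {a, b} → G.ChainConnected a b)

lemma extractInv_of_muStep {s s' : V × Bool} (hstep : G.muStep (G.anSet {a, b} \ {a}) s s')
    (hinv : G.ExtractInv a b s') : G.ExtractInv a b s := by
  rcases s with ⟨v, m⟩
  rcases s' with ⟨w, m'⟩
  obtain ⟨hs, hedge, hp⟩ := hstep
  have hcoll : (m && hs) = true → v ∈ G.anSet {a, b} := fun h =>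
    anSet_subset_of_subset Set.sdiff_subset (by simpa [h] using hp)
  have hnoncoll : (m && hs) = false → v ∈ G.anSet {a, b} → v = a := fun h hv => by
    by_contra hva
    exact (by simpa [h] using hp : v ∉ G.anSet {a, b} \ {a}) ⟨hv, hva⟩
  have leave : (G.dir a w ∨ G.bi a w) → (G.BidirChain (G.anSet {a, b} \ {a}) w b ∨
      G.ChainConnected a b) → G.ChainConnected a b :=
    fun hw hc => hc.elim (fun hc => ⟨w, hw, hc⟩) id
  cases hs <;> cases m' <;> cases m
  · exact hedge.elim
  · exact hedge.elim
  · obtain ⟨hw, hc⟩ := hinv.1 rfl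
    have hv := mem_anSet_of_anc (anc_of_dir hedge) hw
    obtain rfl := hnoncoll rfl hv
    exact ⟨nofun, fun _ _ => leave (.inl hedge) hc⟩
  · obtain ⟨hw, hc⟩ := hinv.1 rfl
    have hv := mem_anSet_of_anc (anc_of_dir hedge) hw
    obtain rfl := hnoncoll rfl hv
    exact ⟨fun _ => ⟨hv, .inr (leave (.inl hedge) hc)⟩, nofun⟩
  · exact ⟨nofun, fun _ hv => hinv.2 rfl (mem_anSet_of_anc (anc_of_dir hedge) hv)⟩
  · have hv := hcoll rfl
    exact ⟨fun _ => ⟨hv, .inr (hinv.2 rfl (mem_anSet_of_anc (anc_of_dir hedge) hv))⟩, nofun⟩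
  · obtain ⟨_, hc⟩ := hinv.1 rfl
    refine ⟨nofun, fun _ hv => ?_⟩
    obtain rfl := hnoncoll rfl hv
    exact leave (.inr hedge) hc
  · obtain ⟨_, hc⟩ := hinv.1 rfl
    have hv := hcoll rfl
    refine ⟨fun _ => ⟨hv, ?_⟩, nofun⟩
    by_cases hva : v = a
    · subst hva
      exact .inr (leave (.inr hedge) hc)
    · exact hc.imp_left fun hc => .head ⟨⟨hv, hva⟩, hedge⟩ hc

theorem chainConnected_of_reach
    (h : ReflTransGen (G.muStep (G.anSet {a, b} \ {a})) (a, false) (b, true)) :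
    G.ChainConnected a b := by
  have key : ∀ s, ReflTransGen (G.muStep (G.anSet {a, b} \ {a})) s (b, true) →
      G.ExtractInv a b s := by
    intro s hs
    induction hs using ReflTransGen.head_induction_on with
    | refl => exact ⟨fun _ => ⟨⟨b, by simp, anc_refl b⟩, .inl .refl⟩, nofun⟩
    | head hstep _ ih => exact extractInv_of_muStep hstep ih
  exact (key _ h).2 rfl ⟨a, by simp, anc_refl a⟩

end Extract

namespace IsMaximal

variable {N : DMG V} {x y c : V}

lemma dir_of_markovEq (hN : N.IsMaximal) (h : MarkovEq (N.addDir x y) N) : N.dir x y := by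
  rcases hN with ⟨hdir, _⟩ | hN
  · exact hdir x y
  · exact by_contra fun hxy => (hN x y).1 hxy h

lemma bi_of_markovEq (hN : N.IsMaximal) (h : MarkovEq (N.addBi x y) N) : N.bi x y := by
  rcases hN with ⟨_, hbi⟩ | hN
  · exact hbi x y
  · exact by_contra fun hxy => (hN x y).2 hxy h

lemma dir_of_bidirChain (hN : N.IsMaximal) (hxc : N.dir x c)
    (hcy : N.BidirChain {z | N.anc z y} c y) : N.dir x y :=
  hN.dir_of_markovEq (markovEq_addDir_of_dir_bidirChain hxc hcy)

lemma bi_of_bidirChain (hN : N.IsMaximal) (hxc : N.bi x c)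
    (hcy : N.BidirChain {z | N.anc z y} c y) : N.bi x y :=
  hN.bi_of_markovEq (markovEq_addBi_of_bi_bidirChain hxc hcy)

lemma dir_of_bi (hN : N.IsMaximal) (hxc : N.dir x c) (hcy : N.anc c y) (hxy : N.bi x y) :
    N.dir x y :=
  hN.dir_of_markovEq (markovEq_addDir_of_bi hxc hcy hxy)

end IsMaximal

section RemoveDir

variable {N : DMG V} {a b : V}

lemma sub_removeDir : (N.removeDir a b).Sub N :=
  ⟨fun _ _ h => h.1, fun _ _ h => h⟩

lemma addDir_removeDir (he : N.dir a b) : (N.removeDir a b).addDir a b = N := by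
  rcases N with ⟨dir, bi, _⟩
  simp only [addDir, removeDir, mk.injEq, and_true]
  funext x y
  by_cases hxy : x = a ∧ y = b
  · obtain ⟨rfl, rfl⟩ := hxy
    simpa using he
  · simp [hxy]

/-- For a node `z` of the chain that is an ancestor of `a` but not of `b`, maximality yields first
`z ↔ b` and then `z → b`. -/
lemma IsMaximal.bidirChain_removeDir (hN : N.IsMaximal) (he : N.dir a b) {c : V}
    (h : (N.removeDir a b).BidirChain ((N.removeDir a b).anSet {a, b} \ {a}) c b) :
    (N.removeDir a b).BidirChain {z | (N.removeDir a b).anc z b} c b := by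
  induction h using ReflTransGen.head_induction_on with
  | refl => exact .refl
  | @head z d hzd _ ih =>
    refine .head ⟨?_, hzd.2⟩ ih
    obtain ⟨⟨t, ht, hzt⟩, hza⟩ := hzd.1
    rcases ht with rfl | rfl
    · rcases ReflTransGen.cases_head hzt with rfl | ⟨p, hzp, hpa⟩
      · exact absurd rfl hza
      have hzb : N.bi z b := hN.bi_of_bidirChain hzd.2
        (ih.mono sub_removeDir fun _ => sub_removeDir.anc)
      have hzb' := hN.dir_of_bi hzp.1 (anc_trans (sub_removeDir.anc hpa) (anc_of_dir he)) hzb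
      exact anc_of_dir ⟨hzb', fun h => hza h.1⟩
    · exact hzt

lemma IsMaximal.markovEq_addDir_removeDir (hN : N.IsMaximal) (he : N.dir a b) (hbi : N.bi a b) :
    MarkovEq ((N.removeDir a b).addDir a b) (N.removeDir a b) := by
  by_cases hab : a = b
  · subst hab
    exact markovEq_addDir_self_of_bi hbi
  have hchain : N.BidirChain {z | N.anc z b} a b := .single ⟨anc_of_dir he, hbi⟩
  refine markovEq_addDir_of_absorbs ⟨hbi, fun x hx hxa => ?_, fun x hx hxa => ?_⟩ hab
  · exact ⟨hN.dir_of_bidirChain hxa.1 hchain, fun h => hx h.1⟩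
  · exact hN.bi_of_bidirChain hxa hchain

end RemoveDir

end DMG

theorem stmt17_general {V : Type u} (N : DMG V) (hmax : N.IsMaximal)
    (a b : V) (he : N.dir a b) :
    DMG.MarkovEq (N.removeDir a b) N ↔ (N.removeDir a b).inU a b := by
  refine ⟨fun h => ?_, fun h => ?_⟩
  · rintro ⟨C, haC, hsep⟩
    exact (h {a} {b} C).1 hsep rfl rfl (.cons (.dirF he) (.nil b)) ⟨haC, trivial, rfl⟩
  set G := N.removeDir a b
  have hreach : Relation.ReflTransGen (G.muStep (G.anSet {a, b} \ {a})) (a, false) (b, true) := by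
    by_contra hne
    refine h ⟨G.anSet {a, b} \ {a}, fun ha => ha.2 rfl, DMG.muSep_iff_not_reach.2 ?_⟩
    rintro _ rfl _ rfl
    exact hne
  obtain ⟨c, hac, hcb⟩ := DMG.chainConnected_of_reach hreach
  have hcb' := hmax.bidirChain_removeDir he hcb
  have hG : DMG.MarkovEq (G.addDir a b) G := by
    rcases hac with hac | hac
    · exact DMG.markovEq_addDir_of_dir_bidirChain hac hcb'
    · exact hmax.markovEq_addDir_removeDir he (hmax.bi_of_bidirChain hac
        (hcb'.mono DMG.sub_removeDir fun _ => DMG.sub_removeDir.anc))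
  rw [DMG.addDir_removeDir he] at hG
  exact fun A B C => (hG A B C).symm

/-- Proposition 17: in a maximal DMG `N` with directed edge
`e = a → b`, `I(N - e) = I(N)` iff `a ∈ u(b, I(N - e))`. -/
theorem stmt17 {V : Type u} [Fintype V] (N : DMG V) (hmax : N.IsMaximal)
    (a b : V) (he : N.dir a b) :
    DMG.MarkovEq (N.removeDir a b) N ↔ (N.removeDir a b).inU a b :=
  stmt17_general N hmax a b he
end

section
/- Let G = (V,E) be a directed mixed graph and A, B, C ⊆ V, with B = {β₁,…,β_k}. Let G(B) be the B-history version of G, with node set V ⊔ B^p where B^p = {β₁^p,…,β_k^p}, whose subgraph on V equals G, with an edge α↔β_i^p whenever α↔β_i in G and an edge α→β_i^p whenever α→β_i in G (for α ∈ V, β_i ∈ B). Then B is μ-separated from A given C in G if and only if B^p and A∖C are m-separated by C in G(B). -/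
/-!
Directed mixed graphs (DMGs) with μ-separation, following
Mogensen & Hansen, "Markov equivalence of marginalized local independence graphs".
-/

universe u

/- A μ-connecting walk from `α` to `β ∈ B` ends with a head at `β`, so redirecting its last
edge to `βᵖ` gives an open walk from `α` to `βᵖ` in `G(B)`. Open walks contain open paths:
cutting out a loop at a node changes the status of that node only; if it becomes a noncollider,
it was one at its first occurrence, and if it becomes a collider, the loop either arrived there
with a head or leads from it by a directed path to a collider, hence into `An(C)`.
Conversely, the nodes of `Bᵖ` carry only heads and are ancestors of no node of `C`, so an
m-connecting path meets `Bᵖ` only at an endpoint; projecting it to `G`, reversed if it starts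
in `Bᵖ`, gives a μ-connecting walk. -/

namespace DMG

section Hom

variable {V : Type u} {W : Type*}

structure Hom (G : DMG V) (H : DMG W) where
  toFun : V → W
  map_dir : ∀ ⦃x y⦄, G.dir x y → H.dir (toFun x) (toFun y)
  map_bi : ∀ ⦃x y⦄, G.bi x y → H.bi (toFun x) (toFun y)

variable {G : DMG V} {H : DMG W} (f : Hom G H)

theorem Hom.anc_map {x y : V} (hxy : G.anc x y) : H.anc (f.toFun x) (f.toFun y) :=
  hxy.lift f.toFun fun _ _ h => f.map_dir h

def Step.map : ∀ {x y : V}, Step G x y → Step H (f.toFun x) (f.toFun y)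
  | _, _, .dirF h => .dirF (f.map_dir h)
  | _, _, .dirB h => .dirB (f.map_dir h)
  | _, _, .bid h => .bid (f.map_bi h)

@[simp] theorem Step.headStart_map {x y : V} (s : Step G x y) :
    (s.map f).headStart = s.headStart := by cases s <;> rfl

@[simp] theorem Step.headEnd_map {x y : V} (s : Step G x y) :
    (s.map f).headEnd = s.headEnd := by cases s <;> rfl

def Walk.map : ∀ {x y : V}, Walk G x y → Walk H (f.toFun x) (f.toFun y)
  | _, _, .nil x => .nil (f.toFun x)
  | _, _, .cons s w => .cons (s.map f) (w.map)

theorem Walk.lastHead_map : ∀ {x y : V} (w : Walk G x y), (w.map f).lastHead = w.lastHead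
  | _, _, .nil _ => rfl
  | _, _, .cons s (.nil _) => s.headEnd_map f
  | _, _, .cons _ (.cons t w) => Walk.lastHead_map (.cons t w)

end Hom

variable {V : Type u} {G : DMG V}

theorem mem_anSet_of_dir {C : Set V} {x y : V} (hxy : G.dir x y) (hy : y ∈ G.anSet C) :
    x ∈ G.anSet C :=
  let ⟨c, hc, hyc⟩ := hy
  ⟨c, hc, hyc.head hxy⟩

def Step.symm : ∀ {a b : V}, Step G a b → Step G b a
  | _, _, .dirF h => .dirB h
  | _, _, .dirB h => .dirF h
  | _, _, .bid h => .bid (G.bi_symm _ _ h)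

@[simp] theorem Step.headStart_symm {a b : V} (s : Step G a b) :
    s.symm.headStart = s.headEnd := by cases s <;> rfl

@[simp] theorem Step.headEnd_symm {a b : V} (s : Step G a b) :
    s.symm.headEnd = s.headStart := by cases s <;> rfl

namespace Walk

variable {C Anc : Set V}

/-- The condition `openFrom` imposes at a node instance entered with mark `h₁` and left
with mark `h₂`. -/
def OpenAt (C Anc : Set V) (x : V) (h₁ h₂ : Bool) : Prop :=
  if h₁ && h₂ then x ∈ Anc else x ∉ C

theorem openAt_comm {x : V} {h₁ h₂ : Bool} :
    OpenAt C Anc x h₁ h₂ ↔ OpenAt C Anc x h₂ h₁ := by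
  rw [OpenAt, OpenAt, Bool.and_comm]

theorem openFrom_cons {a b c : V} {h : Bool} (s : Step G a b) (w : Walk G b c) :
    openFrom C Anc h (cons s w) ↔ OpenAt C Anc a h s.headStart ∧ openFrom C Anc s.headEnd w :=
  Iff.rfl

/-- Openness at the internal node instances only. -/
def IntOpen (C Anc : Set V) : ∀ {a b : V}, Walk G a b → Prop
  | _, _, .nil _ => True
  | _, _, .cons s w => openFrom C Anc s.headEnd w

theorem intOpen_of_openFrom : ∀ {a b : V} {h : Bool} {w : Walk G a b},
    openFrom C Anc h w → IntOpen C Anc w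
  | _, _, _, .nil _, _ => trivial
  | _, _, _, .cons _ _, hw => hw.2

theorem openFrom_false_of_intOpen : ∀ {a b : V} {w : Walk G a b},
    a ∉ C → IntOpen C Anc w → openFrom C Anc false w
  | _, _, .nil _, _, _ => trivial
  | _, _, .cons _ _, ha, hw => ⟨ha, hw⟩

theorem mConn_iff {a b : V} (w : Walk G a b) :
    w.MConn C ↔ w.nodes.Nodup ∧ IntOpen C (G.anSet C) w := by
  cases w <;> simp [MConn, IntOpen, nodes]

theorem muConn_iff {a b : V} (w : Walk G a b) :
    w.MuConn C ↔ a ∉ C ∧ IntOpen C (G.anSet C) w ∧ w.lastHead = true := by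
  cases w <;> simp [MuConn, IntOpen, lastHead]

theorem nodes_eq_cons_tail : ∀ {a b : V} (w : Walk G a b), w.nodes = a :: w.nodes.tail
  | _, _, .nil _ => rfl
  | _, _, .cons _ _ => rfl

section Reverse

def reverseAux : ∀ {a b c : V}, Walk G a b → Walk G a c → Walk G b c
  | _, _, _, .nil _, acc => acc
  | _, _, _, .cons s w, acc => reverseAux w (.cons s.symm acc)

def reverse {a b : V} (w : Walk G a b) : Walk G b a := w.reverseAux (.nil a)

theorem nodes_reverseAux : ∀ {a b c : V} (w : Walk G a b) (acc : Walk G a c),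
    (w.reverseAux acc).nodes = w.nodes.reverse ++ acc.nodes.tail
  | _, _, _, .nil _, acc => nodes_eq_cons_tail acc
  | _, _, _, .cons s w, acc => by
    simp only [reverseAux, nodes_reverseAux w, nodes, List.reverse_cons, List.tail_cons,
      List.append_assoc, List.singleton_append, ← nodes_eq_cons_tail]

theorem nodes_reverse {a b : V} (w : Walk G a b) : w.reverse.nodes = w.nodes.reverse := by
  simp [reverse, nodes_reverseAux, nodes]

theorem intOpen_reverseAux : ∀ {a b c : V} (w : Walk G a b) (acc : Walk G a c),
    w.Nontrivial → IntOpen C Anc w → openFrom C Anc w.firstHead acc →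
      IntOpen C Anc (w.reverseAux acc)
  | _, _, _, .cons s (.nil _), _, _, _, hacc => by
    simpa only [reverseAux, IntOpen, Step.headEnd_symm, firstHead] using hacc
  | _, _, _, .cons s (.cons t w), acc, _, hw, hacc => by
    refine intOpen_reverseAux (.cons t w) (.cons s.symm acc) trivial hw.2
      ((openFrom_cons _ _).2 ⟨?_, ?_⟩)
    · rw [Step.headStart_symm]
      exact openAt_comm.1 hw.1
    · simpa only [Step.headEnd_symm, firstHead] using hacc

theorem intOpen_reverse {a b : V} {w : Walk G a b} (hw : IntOpen C Anc w) :
    IntOpen C Anc w.reverse := by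
  cases w with
  | nil => trivial
  | cons s w => exact intOpen_reverseAux _ _ trivial hw trivial

theorem MConn.reverse {a b : V} {w : Walk G a b} (hw : w.MConn C) : w.reverse.MConn C := by
  rw [mConn_iff] at hw ⊢
  exact ⟨nodes_reverse w ▸ List.nodup_reverse.2 hw.1, intOpen_reverse hw.2⟩

end Reverse

section Shorten

def length : ∀ {a b : V}, Walk G a b → ℕ
  | _, _, .nil _ => 0
  | _, _, .cons _ w => w.length + 1

def append : ∀ {a b c : V}, Walk G a b → Walk G b c → Walk G a c
  | _, _, _, .nil _, w₂ => w₂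
  | _, _, _, .cons s w, w₂ => .cons s (w.append w₂)

theorem length_append : ∀ {a b c : V} (w₁ : Walk G a b) (w₂ : Walk G b c),
    (w₁.append w₂).length = w₁.length + w₂.length
  | _, _, _, .nil _, _ => (Nat.zero_add _).symm
  | _, _, _, .cons _ w, w₂ => by
    simp only [append, length, length_append w w₂]
    omega

theorem nodes_subset_append_right : ∀ {a b c : V} (w₁ : Walk G a b) (w₂ : Walk G b c),
    w₂.nodes ⊆ (w₁.append w₂).nodes
  | _, _, _, .nil _, _ => List.Subset.refl _
  | _, _, _, .cons _ w, w₂ =>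
    List.Subset.trans (nodes_subset_append_right w w₂) (List.subset_cons_self _ _)

theorem exists_eq_append_of_mem_nodes {x : V} : ∀ {a b : V} {w : Walk G a b}, x ∈ w.nodes →
    ∃ (w₁ : Walk G a x) (w₂ : Walk G x b), w = w₁.append w₂
  | _, _, .nil _, hx => by
    obtain rfl := List.mem_singleton.1 hx
    exact ⟨.nil _, .nil _, rfl⟩
  | _, _, .cons s w, hx => by
    rcases List.mem_cons.1 hx with rfl | hx
    · exact ⟨.nil _, .cons s w, rfl⟩
    · obtain ⟨w₁, w₂, rfl⟩ := exists_eq_append_of_mem_nodes hx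
      exact ⟨.cons s w₁, w₂, rfl⟩

/-- The mark with which a walk arrives at its final node, `h` being the mark with which it
arrives at its first node. -/
def arr : ∀ {a b : V}, Bool → Walk G a b → Bool
  | _, _, h, .nil _ => h
  | _, _, _, .cons s w => arr s.headEnd w

theorem openFrom_append : ∀ {a b c : V} (w₁ : Walk G a b) (w₂ : Walk G b c) (h : Bool),
    openFrom C Anc h (w₁.append w₂) ↔
      openFrom C Anc h w₁ ∧ openFrom C Anc (arr h w₁) w₂
  | _, _, _, .nil _, _, _ => ⟨fun hw => ⟨trivial, hw⟩, And.right⟩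
  | _, _, _, .cons s w, w₂, _ => by
    rw [append, openFrom_cons, openFrom_cons, openFrom_append w w₂, and_assoc]
    rfl

variable {D : Set V}

/-- Following an open walk entered with a head, one either meets a collider, reached from
the start by a directed path, or arrives at the end with a head. -/
theorem mem_anSet_or_arr_of_openFrom_true : ∀ {a b : V} (w : Walk G a b),
    openFrom C (G.anSet D) true w → a ∈ G.anSet D ∨ arr true w = true
  | _, _, .nil _, _ => Or.inr rfl
  | _, _, .cons (.dirF hd) w, hw =>
    (mem_anSet_or_arr_of_openFrom_true w hw.2).imp_left (mem_anSet_of_dir hd)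
  | _, _, .cons (.dirB _) _, hw => Or.inl hw.1
  | _, _, .cons (.bid _) _, hw => Or.inl hw.1

theorem openFrom_of_loop_append {a b : V} {h : Bool} (l : Walk G a a) (w : Walk G a b)
    (hlw : openFrom C (G.anSet D) h (l.append w)) : openFrom C (G.anSet D) h w := by
  obtain ⟨hl, hw⟩ := (openFrom_append l w h).1 hlw
  cases w with
  | nil => trivial
  | cons s w =>
    refine ⟨?_, hw.2⟩
    have hw₁ := hw.1
    cases hs : s.headStart <;> cases h <;> simp only [hs, Bool.and_false,
      Bool.and_true] at hw₁ ⊢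
    · exact hw₁
    · exact hw₁
    · cases l with
      | nil => exact hw₁
      | cons t l => exact hl.1
    · -- After the cut `a` is a collider; if the loop does not arrive at `a` with a head,
      -- chasing it from `a` shows `a ∈ An(D)`.
      cases harr : arr true l
      · exact (mem_anSet_or_arr_of_openFrom_true l hl).resolve_right (by simp [harr])
      · simpa [harr] using hw₁

theorem exists_nodup_openFrom : ∀ {a b : V} (h : Bool) (w : Walk G a b),
    openFrom C (G.anSet D) h w →
      ∃ p : Walk G a b, p.nodes ⊆ w.nodes ∧ p.nodes.Nodup ∧ openFrom C (G.anSet D) h p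
  | _, _, _, .nil a, _ => ⟨.nil a, List.Subset.refl _, List.nodup_singleton a, trivial⟩
  | a, _, h, .cons s w, hw => by
    by_cases ha : a ∈ w.nodes
    · obtain ⟨l, w', rfl⟩ := exists_eq_append_of_mem_nodes ha
      obtain ⟨p, hsub, hp⟩ :=
        exists_nodup_openFrom h w' (openFrom_of_loop_append (.cons s l) w' hw)
      exact ⟨p, List.Subset.trans hsub (nodes_subset_append_right (.cons s l) w'), hp⟩
    · obtain ⟨p, hsub, hnd, hp⟩ := exists_nodup_openFrom s.headEnd w hw.2
      exact ⟨.cons s p, List.cons_subset_cons _ hsub,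
        List.nodup_cons.2 ⟨fun hp => ha (hsub hp), hnd⟩, hw.1, hp⟩
termination_by _ _ _ w => w.length
decreasing_by
  all_goals subst_vars; simp only [length, length_append]; omega

end Shorten

end Walk

section History

variable {V : Type u} {G : DMG V} {B C : Set V}

abbrev inlHom (G : DMG V) (B : Set V) : Hom G (G.hist B) :=
  ⟨Sum.inl, fun _ _ h => h, fun _ _ h => h⟩

def prjHom (G : DMG V) (B : Set V) : Hom (G.hist B) G where
  toFun := Sum.elim id Subtype.val
  map_dir := by rintro (x | x) (y | y) h <;> first | exact h | exact h.elim
  map_bi := by rintro (x | x) (y | y) h <;> first | exact h | exact h.elim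

theorem inl_mem_anSet_hist_iff {u : V} :
    Sum.inl u ∈ (G.hist B).anSet (Sum.inl '' C) ↔ u ∈ G.anSet C := by
  constructor
  · rintro ⟨_, ⟨c, hc, rfl⟩, huc⟩
    exact ⟨c, hc, (prjHom G B).anc_map huc⟩
  · rintro ⟨c, hc, huc⟩
    exact ⟨_, ⟨c, hc, rfl⟩, (inlHom G B).anc_map huc⟩

theorem inr_not_mem_anSet_hist {v : {x // x ∈ B}} :
    Sum.inr v ∉ (G.hist B).anSet (Sum.inl '' C) := by
  rintro ⟨_, ⟨c, -, rfl⟩, hvc⟩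
  rcases hvc.cases_head with h | ⟨_, h, -⟩
  · cases h
  · exact h.elim

theorem Step.headEnd_eq_true_of_inr {x : V ⊕ {x // x ∈ B}} {v : {x // x ∈ B}}
    (s : Step (G.hist B) x (.inr v)) : s.headEnd = true := by
  cases s with
  | dirB h => exact h.elim
  | _ => rfl

theorem Step.headStart_eq_true_of_inr {y : V ⊕ {x // x ∈ B}} {v : {x // x ∈ B}}
    (s : Step (G.hist B) (.inr v) y) : s.headStart = true := by
  cases s with
  | dirF h => exact h.elim
  | _ => rfl

variable {b : V} (hb : b ∈ B)

def Step.liftLast : ∀ {x : V} (s : Step G x b), s.headEnd = true →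
    Step (G.hist B) (.inl x) (.inr ⟨b, hb⟩)
  | _, .dirF h, _ => .dirF (b := (Sum.inr ⟨b, hb⟩ : V ⊕ {x // x ∈ B})) h
  | _, .bid h, _ => .bid (b := (Sum.inr ⟨b, hb⟩ : V ⊕ {x // x ∈ B})) h

theorem Step.headStart_liftLast {x : V} (s : Step G x b) (he : s.headEnd = true) :
    (s.liftLast hb he).headStart = s.headStart := by
  cases s with
  | dirB _ => exact nomatch he
  | _ => rfl

namespace Walk

theorem openAt_inl_iff {u : V} {h₁ h₂ : Bool} :
    OpenAt (Sum.inl '' C) ((G.hist B).anSet (Sum.inl '' C)) (Sum.inl u) h₁ h₂ ↔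
      OpenAt C (G.anSet C) u h₁ h₂ := by
  unfold OpenAt
  split_ifs
  · exact inl_mem_anSet_hist_iff
  · exact not_congr Sum.inl_injective.mem_set_image

theorem lastHead_eq_true_of_inr : ∀ {x : V ⊕ {x // x ∈ B}} {v : {x // x ∈ B}}
    (w : Walk (G.hist B) x (.inr v)), w.Nontrivial → w.lastHead = true
  | _, _, .cons s (.nil _), _ => s.headEnd_eq_true_of_inr
  | _, _, .cons _ (.cons t w), _ => lastHead_eq_true_of_inr (.cons t w) trivial

/-- The nodes of `Bᵖ` have only heads, so they can occur on an open walk only as endpoints. -/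
theorem openFrom_map_prjHom :
    ∀ {x y : V ⊕ {x // x ∈ B}} {h : Bool} (w : Walk (G.hist B) x y),
    openFrom (Sum.inl '' C) ((G.hist B).anSet (Sum.inl '' C)) h w →
    (∀ v, x = .inr v → h = true) → openFrom C (G.anSet C) h (w.map (prjHom G B))
  | _, _, _, .nil _, _, _ => trivial
  | .inl _, _, _, .cons s w, hw, _ => by
    refine (openFrom_cons _ _).2 ⟨?_, ?_⟩
    · rw [Step.headStart_map]
      exact openAt_inl_iff.1 hw.1
    · rw [Step.headEnd_map]
      exact openFrom_map_prjHom w hw.2 (by rintro v rfl; exact s.headEnd_eq_true_of_inr)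
  | .inr v, _, _, .cons s _, hw, hv => by
    have hw₁ := hw.1
    simp only [hv v rfl, s.headStart_eq_true_of_inr, Bool.and_self, if_true] at hw₁
    exact absurd hw₁ inr_not_mem_anSet_hist

theorem MConn.muConn_map_prjHom {a : V} {v : {x // x ∈ B}}
    {p : Walk (G.hist B) (.inl a) (.inr v)}
    (ha : a ∉ C) (hp : p.MConn (Sum.inl '' C)) : (p.map (prjHom G B)).MuConn C := by
  rw [mConn_iff] at hp
  rw [muConn_iff, lastHead_map]
  cases p with
  | cons s w =>
    refine ⟨ha, ?_, lastHead_eq_true_of_inr _ trivial⟩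
    show openFrom C (G.anSet C) (s.map (prjHom G B)).headEnd (w.map (prjHom G B))
    rw [Step.headEnd_map]
    exact openFrom_map_prjHom w hp.2 (by rintro v rfl; exact s.headEnd_eq_true_of_inr)

def liftHist : ∀ {x : V} (w : Walk G x b), w.lastHead = true →
    Walk (G.hist B) (.inl x) (.inr ⟨b, hb⟩)
  | _, .cons s (.nil _), hl => .cons (s.liftLast hb hl) (.nil _)
  | _, .cons s (.cons t w), hl => .cons (s.map (inlHom G B)) (liftHist (.cons t w) hl)

theorem openFrom_liftHist : ∀ {x : V} {h : Bool} (w : Walk G x b) (hl : w.lastHead = true),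
    openFrom C (G.anSet C) h w →
      openFrom (Sum.inl '' C) ((G.hist B).anSet (Sum.inl '' C)) h (w.liftHist hb hl)
  | _, _, .cons s (.nil _), hl, hw => by
    refine (openFrom_cons _ _).2 ⟨?_, trivial⟩
    rw [Step.headStart_liftLast hb s hl]
    exact openAt_inl_iff.2 hw.1
  | _, _, .cons s (.cons t w), hl, hw => by
    refine (openFrom_cons _ _).2 ⟨?_, ?_⟩
    · rw [Step.headStart_map]
      exact openAt_inl_iff.2 hw.1
    · rw [Step.headEnd_map]
      exact openFrom_liftHist (.cons t w) hl hw.2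

theorem MuConn.exists_mConn_hist {a : V} {w : Walk G a b} (hw : w.MuConn C) :
    ∃ p : Walk (G.hist B) (.inl a) (.inr ⟨b, hb⟩), p.MConn (Sum.inl '' C) := by
  obtain ⟨ha, hint, hl⟩ := (muConn_iff w).1 hw
  obtain ⟨p, -, hnd, hp⟩ :=
    exists_nodup_openFrom false _ (openFrom_liftHist hb w hl (openFrom_false_of_intOpen ha hint))
  exact ⟨p, (mConn_iff p).2 ⟨hnd, intOpen_of_openFrom hp⟩⟩

end Walk

end History

end DMG

theorem stmt19_general {V : Type u} (G : DMG V) (A B C : Set V) :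
    DMG.muSep G A B C ↔
      DMG.mSep (G.hist B)
        (Set.range (Sum.inr : {x : V // x ∈ B} → V ⊕ {x : V // x ∈ B}))
        (Sum.inl '' (A \ C)) (Sum.inl '' C) := by
  refine ⟨fun hμ => ?_, fun hm a b ha hb w hw => ?_⟩
  · rintro _ _ ⟨β, rfl⟩ ⟨a, ⟨haA, haC⟩, rfl⟩
    have h : ∀ p : DMG.Walk (G.hist B) (.inl a) (.inr β), ¬ p.MConn (Sum.inl '' C) :=
      fun p hp => hμ haA β.2 _ (hp.muConn_map_prjHom haC)
    exact ⟨fun p hp => h _ hp.reverse, h⟩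
  · obtain ⟨p, hp⟩ := hw.exists_mConn_hist hb
    have haC := ((DMG.Walk.muConn_iff w).1 hw).1
    exact (hm ⟨⟨b, hb⟩, rfl⟩ ⟨a, ⟨ha, haC⟩, rfl⟩).2 p hp

/-- Proposition 19: `B` is μ-separated from `A` given `C`
in `G` iff `Bᵖ` and `A ∖ C` are m-separated by `C` in the `B`-history version
`G(B)` of `G`. -/
theorem stmt19 {V : Type u} [Fintype V] (G : DMG V) (A B C : Set V) :
    DMG.muSep G A B C ↔
      DMG.mSep (G.hist B)
        (Set.range (Sum.inr : {x : V // x ∈ B} → V ⊕ {x : V // x ∈ B}))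
        (Sum.inl '' (A \ C)) (Sum.inl '' C) :=
  stmt19_general G A B C
end
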